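/- arXiv:1912.11857 — 2 statements merged into one kernel-verified Lean document; each statement's English description precedes it below -/
import Mathlib

section
/- Let c₁,c₂,c₃,c₄ be nonzero integers. For every ε>0 there exists a constant C>0 (depending only on c₁,…,c₄ and ε) such that for all real B ≥ 1, the number of x=(x₁,…,x₄)∈ℤ⁴ with max|xᵢ| ≤ B and c₁x₁²+c₂x₂²+c₃x₃²+c₄x₄²=0 is at most C·B^{2+ε}. -/
/-!
Split the form as `f(x₁, x₂) = g(x₃, x₄)` with the binary forms `f = c₁X² + c₂Y²` and
`g = -c₃X² - c₄Y²`. By `2ab ≤ a² + b²` over the common values, the number of zeros is at most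
the average of the numbers of collisions `f(v) = f(v')` and `g(w) = g(w')` in the box. A collision
`d a² + e b² = d a'² + e b'²` either has `a² = a'²` and `b² = b'²` (`O(B²)` of them), or
`e (b - b')(b + b') = d (a'² - a²) ≠ 0`, so that `b - b'` is one of the `O(B^ε)` divisors of a
nonzero integer of size `O(B²)` and determines `(b, b')`.
-/

open Finset

section Collisions

variable {α β γ : Type*} [DecidableEq γ]

lemma Finset.card_filter_eq_eq_sum_card_mul_card (s : Finset α) (t : Finset β) (f : α → γ)
    (g : β → γ) (u : Finset γ) (hu : ∀ x ∈ s, f x ∈ u) :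
    #{p ∈ s ×ˢ t | f p.1 = g p.2} = ∑ c ∈ u, #{x ∈ s | f x = c} * #{y ∈ t | g y = c} := by
  rw [card_eq_sum_card_fiberwise (f := fun p => f p.1) fun p hp =>
    hu _ (mem_product.1 (mem_filter.1 hp).1).1]
  refine sum_congr rfl fun c _ => ?_
  rw [← card_product]
  congr 1
  ext ⟨x, y⟩
  simp only [mem_filter, mem_product]
  grind

theorem Finset.two_mul_card_filter_eq_le_add (s : Finset α) (t : Finset β) (f : α → γ)
    (g : β → γ) :
    2 * #{p ∈ s ×ˢ t | f p.1 = g p.2} ≤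
      #{p ∈ s ×ˢ s | f p.1 = f p.2} + #{p ∈ t ×ˢ t | g p.1 = g p.2} := by
  set u := s.image f ∪ t.image g
  have hs : ∀ x ∈ s, f x ∈ u := fun x hx => mem_union_left _ (mem_image_of_mem f hx)
  have ht : ∀ y ∈ t, g y ∈ u := fun y hy => mem_union_right _ (mem_image_of_mem g hy)
  rw [card_filter_eq_eq_sum_card_mul_card s t f g u hs, card_filter_eq_eq_sum_card_mul_card s s f f u hs,
    card_filter_eq_eq_sum_card_mul_card t t g g u ht, mul_sum, ← sum_add_distrib]
  gcongr with c
  rw [← mul_assoc, ← sq, ← sq]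
  exact two_mul_le_add_sq _ _

end Collisions

lemma succ_le_div_sub_one_mul_pow {r : ℝ} (hr : 1 < r) (a : ℕ) :
    (a + 1 : ℝ) ≤ r / (r - 1) * r ^ a := by
  have hbern : 1 + a * (r - 1) ≤ r ^ a := by
    simpa using one_add_mul_le_pow (a := r - 1) (by linarith) a
  have hone : 1 ≤ r ^ a := one_le_pow₀ hr.le
  rw [div_mul_eq_mul_div, le_div_iff₀ (by linarith)]
  nlinarith

lemma succ_le_pow_rpow {x ε : ℝ} (hx : 0 ≤ x) (h : 2 ≤ x ^ ε) (a : ℕ) :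
    (a + 1 : ℝ) ≤ (x ^ a) ^ ε := by
  rw [← Real.rpow_pow_comm hx]
  calc (a + 1 : ℝ) ≤ 2 ^ a := by exact_mod_cast Nat.lt_two_pow_self
    _ ≤ (x ^ ε) ^ a := pow_le_pow_left₀ (by norm_num) h a

theorem Nat.exists_card_divisors_le_mul_rpow {ε : ℝ} (hε : 0 < ε) :
    ∃ C : ℝ, 0 < C ∧ ∀ n : ℕ, n ≠ 0 → (#n.divisors : ℝ) ≤ C * (n : ℝ) ^ ε := by
  set r : ℝ := 2 ^ ε
  have hr : 1 < r := Real.one_lt_rpow (by norm_num) hε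
  set K := r / (r - 1)
  have hK : 1 ≤ K := by rw [le_div_iff₀ (by linarith)]; linarith
  set P : ℕ := ⌈(2 : ℝ) ^ ε⁻¹⌉₊
  -- `p ^ ε ≥ 2` once `p ≥ 2 ^ ε⁻¹`; each of the fewer than `P` smaller primes costs a factor `K`
  have hprime : ∀ p a : ℕ, 2 ≤ p →
      (a + 1 : ℝ) ≤ (if p < P then K else 1) * ((p : ℝ) ^ a) ^ ε := by
    intro p a hp
    have hp' : (2 : ℝ) ≤ p := by exact_mod_cast hp
    split_ifs with hpP
    · calc (a + 1 : ℝ) ≤ K * r ^ a := succ_le_div_sub_one_mul_pow hr a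
        _ ≤ K * ((p : ℝ) ^ ε) ^ a := by
          gcongr
          exact Real.rpow_le_rpow (by norm_num) hp' hε.le
        _ = K * ((p : ℝ) ^ a) ^ ε := by rw [Real.rpow_pow_comm (by positivity)]
    · rw [one_mul]
      refine succ_le_pow_rpow (by positivity) ?_ a
      calc (2 : ℝ) = ((2 : ℝ) ^ ε⁻¹) ^ ε := (Real.rpow_inv_rpow (by norm_num) hε.ne').symm
        _ ≤ (p : ℝ) ^ ε := by
          gcongr
          exact (Nat.le_ceil _).trans (by exact_mod_cast not_lt.1 hpP)
  refine ⟨K ^ P, by positivity, fun n hn => ?_⟩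
  have hsmall : ∏ p ∈ n.primeFactors, (if p < P then K else 1) ≤ K ^ P := by
    rw [prod_ite, prod_const_one, mul_one, prod_const]
    refine pow_le_pow_right₀ hK ((card_le_card fun p hp => ?_).trans (card_range P).le)
    exact mem_range.2 (mem_filter.1 hp).2
  have hn_eq : ∏ p ∈ n.primeFactors, ((p : ℝ) ^ n.factorization p) ^ ε = (n : ℝ) ^ ε := by
    rw [Real.finsetProd_rpow _ _ fun p _ => by positivity]
    congr 1
    exact_mod_cast Nat.prod_factorization_pow_eq_self hn
  calc (#n.divisors : ℝ) = ∏ p ∈ n.primeFactors, ((n.factorization p : ℝ) + 1) := by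
        rw [Nat.card_divisors hn]; push_cast; rfl
    _ ≤ ∏ p ∈ n.primeFactors, (if p < P then K else 1) * ((p : ℝ) ^ n.factorization p) ^ ε :=
        prod_le_prod (fun _ _ => by positivity)
          fun p hp => hprime p _ (Nat.prime_of_mem_primeFactors hp).two_le
    _ ≤ K ^ P * (n : ℝ) ^ ε := by
        rw [prod_mul_distrib, hn_eq]; gcongr

noncomputable def intBox (B : ℝ) : Finset ℤ := Icc (-⌊B⌋) ⌊B⌋

lemma mem_intBox {B : ℝ} {x : ℤ} : x ∈ intBox B ↔ ((|x| : ℤ) : ℝ) ≤ B := by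
  rw [intBox, mem_Icc, ← abs_le, Int.le_floor]

lemma card_intBox_le {B : ℝ} (hB : 1 ≤ B) : (#(intBox B) : ℝ) ≤ 3 * B := by
  have hfloor : (0 : ℤ) ≤ ⌊B⌋ := Int.floor_nonneg.2 (by linarith)
  have hcard : (#(intBox B) : ℤ) = 2 * ⌊B⌋ + 1 := by
    rw [intBox, Int.card_Icc, Int.toNat_of_nonneg (by omega)]; ring
  have : ((#(intBox B) : ℤ) : ℝ) ≤ 3 * B := by
    rw [hcard]; push_cast; linarith [Int.floor_le B]
  exact_mod_cast this

lemma Int.card_divisors (z : ℤ) : #z.divisors = 2 * #z.natAbs.divisors := by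
  rw [Int.divisors, card_disjUnion, card_map, card_map, two_mul]

lemma card_filter_sq_eq_sq_le (I : Finset ℤ) : #{r ∈ I ×ˢ I | r.1 ^ 2 = r.2 ^ 2} ≤ 2 * #I := by
  calc #{r ∈ I ×ˢ I | r.1 ^ 2 = r.2 ^ 2}
      ≤ #(I.image (fun b => (b, b)) ∪ I.image (fun b => (b, -b))) := by
        refine card_le_card fun r hr => ?_
        obtain ⟨⟨hr₁, -⟩, hsq⟩ := by simpa only [mem_filter, mem_product] using hr
        rcases sq_eq_sq_iff_eq_or_eq_neg.1 hsq with h | h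
        · exact mem_union_left _ (mem_image.2 ⟨r.1, hr₁, Prod.ext rfl h⟩)
        · exact mem_union_right _ (mem_image.2 ⟨r.1, hr₁, Prod.ext rfl (by rw [h, neg_neg])⟩)
    _ ≤ 2 * #I := (card_union_le _ _).trans (by rw [two_mul]; gcongr <;> exact card_image_le)

/-- The difference `r.1 - r.2` is a divisor of `s` which determines `r`, since `e * (r.1 + r.2)`
is then the complementary divisor. -/
lemma card_filter_mul_sq_sub_sq_eq_le (S : Finset (ℤ × ℤ)) (e : ℤ) {s : ℤ} (hs : s ≠ 0) :
    #{r ∈ S | e * (r.1 ^ 2 - r.2 ^ 2) = s} ≤ #s.divisors := by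
  have hfactor : ∀ r : ℤ × ℤ, e * (r.1 ^ 2 - r.2 ^ 2) = (r.1 - r.2) * (e * (r.1 + r.2)) :=
    fun r => by ring
  refine card_le_card_of_injOn (fun r => r.1 - r.2) (fun r hr => ?_) fun r hr r' hr' hrr' => ?_
  · have hr := (mem_filter.1 hr).2
    rw [hfactor] at hr
    exact Int.mem_divisors.2 ⟨⟨_, hr.symm⟩, hs⟩
  · have hr := (mem_filter.1 hr).2
    have hr' := (mem_filter.1 hr').2
    simp only at hrr'
    rw [hfactor] at hr hr'
    rw [← hr, hrr'] at hr' hs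
    have hsum := mul_left_cancel₀ (left_ne_zero_of_mul (right_ne_zero_of_mul hs))
      (mul_left_cancel₀ (left_ne_zero_of_mul hs) hr')
    ext <;> omega

def binaryForm (d e : ℤ) (v : ℤ × ℤ) : ℤ := d * v.1 ^ 2 + e * v.2 ^ 2

lemma card_filter_binaryForm_eq_eq_sum (I : Finset ℤ) (d e : ℤ) :
    #{p ∈ (I ×ˢ I) ×ˢ (I ×ˢ I) | binaryForm d e p.1 = binaryForm d e p.2} =
      ∑ q ∈ I ×ˢ I, #{r ∈ I ×ˢ I | e * (r.1 ^ 2 - r.2 ^ 2) = d * (q.2 ^ 2 - q.1 ^ 2)} := by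
  rw [card_eq_sum_card_fiberwise (f := fun p => (p.1.1, p.2.1)) (t := I ×ˢ I) fun p hp => by
    simp only [coe_filter, Set.mem_ofPred_eq, mem_product, mem_coe] at hp ⊢
    exact ⟨hp.1.1.1, hp.1.2.1⟩]
  refine sum_congr rfl fun q _ => card_nbij' (fun p => (p.1.2, p.2.2))
    (fun r => ((q.1, r.1), (q.2, r.2))) ?_ ?_ ?_ ?_
  all_goals
    simp only [Set.MapsTo, Set.LeftInvOn, Set.RightInvOn, coe_filter, Set.mem_ofPred_eq,
      mem_product, binaryForm, Prod.ext_iff]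
    grind

lemma natAbs_mul_sq_sub_sq_le {B : ℝ} (d : ℤ) {a b : ℤ} (ha : ((|a| : ℤ) : ℝ) ≤ B)
    (hb : ((|b| : ℤ) : ℝ) ≤ B) : ((d * (b ^ 2 - a ^ 2)).natAbs : ℝ) ≤ |(d : ℝ)| * B ^ 2 := by
  have hsq : ∀ x : ℤ, ((|x| : ℤ) : ℝ) ≤ B → (x : ℝ) ^ 2 ≤ B ^ 2 := fun x hx => by
    rw [← sq_abs]; push_cast at hx; gcongr
  rw [Nat.cast_natAbs]
  push_cast
  rw [abs_mul]
  gcongr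
  exact abs_sub_le_of_nonneg_of_le (sq_nonneg _) (hsq b hb) (sq_nonneg _) (hsq a ha)

lemma card_fiber_le_of_sq_eq (I : Finset ℤ) (d : ℤ) {e : ℤ} (he : e ≠ 0) {a b : ℤ}
    (hab : a ^ 2 = b ^ 2) :
    #{r ∈ I ×ˢ I | e * (r.1 ^ 2 - r.2 ^ 2) = d * (b ^ 2 - a ^ 2)} ≤ 2 * #I := by
  refine (card_le_card fun r hr => ?_).trans (card_filter_sq_eq_sq_le I)
  simpa only [mem_filter, hab, sub_self, mul_zero, mul_eq_zero, he, false_or, sub_eq_zero]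
    using hr

lemma card_fiber_le_of_sq_ne (S : Finset (ℤ × ℤ)) {d : ℤ} (hd : d ≠ 0) (e : ℤ) {B C δ : ℝ}
    (hδ : 0 ≤ δ) (hτ : ∀ n : ℕ, n ≠ 0 → (#n.divisors : ℝ) ≤ C * (n : ℝ) ^ δ) {a b : ℤ}
    (ha : a ∈ intBox B) (hb : b ∈ intBox B) (hab : a ^ 2 ≠ b ^ 2) :
    (#{r ∈ S | e * (r.1 ^ 2 - r.2 ^ 2) = d * (b ^ 2 - a ^ 2)} : ℝ) ≤
      2 * C * (|(d : ℝ)| * B ^ 2) ^ δ := by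
  set s := d * (b ^ 2 - a ^ 2)
  have hs : s ≠ 0 := mul_ne_zero hd (sub_ne_zero.2 (Ne.symm hab))
  have hC : 1 ≤ C := by simpa using hτ 1 one_ne_zero
  calc (#{r ∈ S | e * (r.1 ^ 2 - r.2 ^ 2) = s} : ℝ) ≤ #s.divisors := by
        exact_mod_cast card_filter_mul_sq_sub_sq_eq_le S e hs
    _ = 2 * #s.natAbs.divisors := by rw [Int.card_divisors]; push_cast; rfl
    _ ≤ 2 * (C * (s.natAbs : ℝ) ^ δ) := by gcongr; exact hτ _ (Int.natAbs_ne_zero.2 hs)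
    _ ≤ 2 * C * (|(d : ℝ)| * B ^ 2) ^ δ := by
        rw [← mul_assoc]
        gcongr
        exact natAbs_mul_sq_sub_sq_le d (mem_intBox.1 ha) (mem_intBox.1 hb)

theorem exists_card_filter_binaryForm_eq_le {d e : ℤ} (hd : d ≠ 0) (he : e ≠ 0) {ε : ℝ}
    (hε : 0 < ε) : ∃ K : ℝ, 0 < K ∧ ∀ B : ℝ, 1 ≤ B →
      (#{p ∈ (intBox B ×ˢ intBox B) ×ˢ (intBox B ×ˢ intBox B) |
        binaryForm d e p.1 = binaryForm d e p.2} : ℝ) ≤ K * B ^ (2 + ε) := by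
  obtain ⟨C, hC, hτ⟩ := Nat.exists_card_divisors_le_mul_rpow (half_pos hε)
  set D := |(d : ℝ)| ^ (ε / 2)
  refine ⟨36 + 18 * C * D, by positivity, fun B hB => ?_⟩
  set I := intBox B
  have hI := card_intBox_le hB
  have hBε : 1 ≤ B ^ ε := Real.one_le_rpow hB hε.le
  have hsplit : (|(d : ℝ)| * B ^ 2) ^ (ε / 2) = D * B ^ ε := by
    rw [Real.mul_rpow (abs_nonneg _) (by positivity), ← Real.rpow_natCast,
      ← Real.rpow_mul (by linarith)]
    congr 2
    push_cast
    ring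
  rw [card_filter_binaryForm_eq_eq_sum, Nat.cast_sum,
    ← sum_filter_add_sum_filter_not _ fun q : ℤ × ℤ => q.1 ^ 2 = q.2 ^ 2]
  calc _ ≤ (#{q ∈ I ×ˢ I | q.1 ^ 2 = q.2 ^ 2} : ℝ) * (2 * #I) +
        (#(I ×ˢ I) : ℝ) * (2 * C * (|(d : ℝ)| * B ^ 2) ^ (ε / 2)) := by
        gcongr
        · refine (sum_le_card_nsmul _ _ _ fun q hq => ?_).trans_eq (nsmul_eq_mul _ _)
          exact_mod_cast card_fiber_le_of_sq_eq I d he (mem_filter.1 hq).2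
        · refine (sum_le_card_nsmul _ _ (2 * C * (|(d : ℝ)| * B ^ 2) ^ (ε / 2))
            fun q hq => ?_).trans ?_
          · obtain ⟨hq, hne⟩ := mem_filter.1 hq
            exact card_fiber_le_of_sq_ne _ hd e (by linarith) hτ (mem_product.1 hq).1
              (mem_product.1 hq).2 hne
          · rw [nsmul_eq_mul]
            gcongr
            exact filter_subset _ _
    _ ≤ (2 * #I) * (2 * #I) + (#I : ℝ) ^ 2 * (2 * C * (D * B ^ ε)) := by
        rw [card_product, Nat.cast_mul, ← sq, hsplit]
        gcongr
        exact_mod_cast card_filter_sq_eq_sq_le I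
    _ ≤ (2 * (3 * B)) * (2 * (3 * B)) + (3 * B) ^ 2 * (2 * C * (D * B ^ ε)) := by gcongr
    _ ≤ (36 + 18 * C * D) * (B ^ (2 : ℝ) * B ^ ε) := by
        rw [Real.rpow_two]
        nlinarith [sq_nonneg B, mul_nonneg hC.le (Real.rpow_nonneg (abs_nonneg (d : ℝ)) (ε / 2))]
    _ = (36 + 18 * C * D) * B ^ (2 + ε) := by rw [Real.rpow_add (by linarith)]

lemma ncard_zeros_le_card_filter_binaryForm_eq (c : Fin 4 → ℤ) (B : ℝ) :
    Set.ncard {x : Fin 4 → ℤ | (∀ i, ((|x i| : ℤ) : ℝ) ≤ B) ∧ (∑ i, c i * x i ^ 2) = 0} ≤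
      #{p ∈ (intBox B ×ˢ intBox B) ×ˢ (intBox B ×ˢ intBox B) |
        binaryForm (c 0) (c 1) p.1 = binaryForm (-c 2) (-c 3) p.2} := by
  rw [← Set.ncard_coe_finset]
  refine Set.ncard_le_ncard_of_injOn (fun x => ((x 0, x 1), (x 2, x 3))) ?_ ?_ (finite_toSet _)
  · rintro x ⟨hbox, hx⟩
    rw [Fin.sum_univ_four] at hx
    rw [mem_coe, mem_filter]
    simp only [mem_product, mem_intBox, binaryForm]
    exact ⟨⟨⟨hbox 0, hbox 1⟩, hbox 2, hbox 3⟩, by linarith⟩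
  · intro x _ y _ h
    simp only [Prod.ext_iff] at h
    funext i
    fin_cases i <;> simp [h]

/-- the crude bound `O(B^{2+ε})` for the number of integral zeros, in a box of
side `B`, of a nondegenerate diagonal quaternary quadratic form `c₁x₁²+c₂x₂²+c₃x₃²+c₄x₄²`. -/
theorem stmt_5 (c : Fin 4 → ℤ) (hc : ∀ i, c i ≠ 0) :
    ∀ ε : ℝ, 0 < ε → ∃ C : ℝ, 0 < C ∧ ∀ B : ℝ, 1 ≤ B →
      (Set.ncard {x : Fin 4 → ℤ | (∀ i, ((|x i| : ℤ) : ℝ) ≤ B) ∧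
          (∑ i, c i * x i ^ 2) = 0} : ℝ)
        ≤ C * B ^ ((2 : ℝ) + ε) := by
  intro ε hε
  obtain ⟨K₁, hK₁, h₁⟩ := exists_card_filter_binaryForm_eq_le (hc 0) (hc 1) hε
  obtain ⟨K₂, hK₂, h₂⟩ :=
    exists_card_filter_binaryForm_eq_le (neg_ne_zero.2 (hc 2)) (neg_ne_zero.2 (hc 3)) hε
  refine ⟨(K₁ + K₂) / 2, by positivity, fun B hB => ?_⟩
  set X := intBox B ×ˢ intBox B
  have h2 := Nat.cast_le (α := ℝ) |>.2 <|
    two_mul_card_filter_eq_le_add X X (binaryForm (c 0) (c 1)) (binaryForm (-c 2) (-c 3))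
  push_cast at h2
  calc _ ≤ (#{p ∈ X ×ˢ X | binaryForm (c 0) (c 1) p.1 = binaryForm (-c 2) (-c 3) p.2} : ℝ) := by
        exact_mod_cast ncard_zeros_le_card_filter_binaryForm_eq c B
    _ ≤ (K₁ * B ^ (2 + ε) + K₂ * B ^ (2 + ε)) / 2 := by linarith [h₁ B hB, h₂ B hB]
    _ = (K₁ + K₂) / 2 * B ^ (2 + ε) := by ring
end

section
/- Let a₁,a₂,a₃,a₄,b₁,b₂,b₃,b₄ be nonzero integers, ψ₁(x)=Σaᵢxᵢ², ψ₂(x)=Σbᵢxᵢ². Let q=q₁q₂ and c=c₁c₂ be positive integers with q₁, q₂ odd and gcd(q₁c₁, q₂c₂)=1. Then for every w∈ℤ⁴, S_{q,c}(w) = S_{q₁,c₁}(w)·S_{q₂,c₂}(w). -/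
open scoped Classical

/-- `ψ(c, x) = c₁x₁² + c₂x₂² + c₃x₃² + c₄x₄²` for a diagonal quaternary quadratic form. -/
def psi (c : Fin 4 → ℤ) (x : Fin 4 → ℤ) : ℤ := ∑ i, c i * x i ^ 2

/-- The character sum
`S_{q,c}(w) = Σ*_{a mod c} Σ_{k mod qc, ψ₁(k)≡0 mod q} χ_q(ψ₂(k)) e((aψ₁(k)+w·k)/(qc))`,
where `χ_q` is the Jacobi symbol mod `q` and `e(t) = exp(2πit)`. -/
noncomputable def S (a b : Fin 4 → ℤ) (q c : ℕ) (w : Fin 4 → ℤ) : ℂ :=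
  ∑ x ∈ (Finset.range c).filter (fun x => Nat.Coprime x c),
    ∑ k ∈ (Fintype.piFinset fun _ : Fin 4 => Finset.range (q * c)).filter
        (fun k => (q : ℤ) ∣ psi a (fun i => (k i : ℤ))),
      (jacobiSym (psi b (fun i => (k i : ℤ))) q : ℂ) *
        Complex.exp (2 * (Real.pi : ℂ) * Complex.I *
          (((x : ℂ) * ((psi a (fun i => (k i : ℤ)) : ℤ) : ℂ) + ∑ i, (w i : ℂ) * (k i : ℂ))
            / ((q : ℂ) * (c : ℂ))))

/-!
Put `N₁ = q₁c₁` and `N₂ = q₂c₂`. By the Chinese remainder theorem, `k mod N₁N₂` corresponds to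
the pair `k₁ ≡ kN₂⁻¹ mod N₁`, `k₂ ≡ kN₁⁻¹ mod N₂`, and a unit `a mod c₁c₂` to the pair of units
`a₁ ≡ aN₂ mod c₁`, `a₂ ≡ aN₁ mod c₂`. Then `ψᵢ(k) ≡ N₂²ψᵢ(k₁) mod q₁` (and symmetrically), so the
condition `q ∣ ψ₁(k)` and the Jacobi symbol `χ_q(ψ₂(k))` split into their `q₁`- and `q₂`-parts,
`N₂²` being a square prime to `q₁`. Once `q₁ ∣ ψ₁(k₁)` and `q₂ ∣ ψ₁(k₂)`, the numerator
`aψ₁(k) + w·k` is congruent to `N₂(a₁ψ₁(k₁) + w·k₁)` mod `N₁` and to `N₁(a₂ψ₁(k₂) + w·k₂)`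
mod `N₂`, which makes the exponential factor too. So the summand is multiplicative along the
bijection, and the double sum splits into the product.
-/

open Finset

noncomputable def eDiv (N : ℕ) (z : ℤ) : ℂ :=
  Complex.exp (2 * Real.pi * Complex.I * (z / N))

lemma eDiv_congr {N : ℕ} (hN : N ≠ 0) {z z' : ℤ} (h : z ≡ z' [ZMOD N]) :
    eDiv N z = eDiv N z' := by
  obtain ⟨t, ht⟩ := Int.modEq_iff_dvd.mp h.symm
  have hNC : (N : ℂ) ≠ 0 := Nat.cast_ne_zero.mpr hN
  have harg : 2 * Real.pi * Complex.I * (z / N)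
      = 2 * Real.pi * Complex.I * (z' / N) + t * (2 * Real.pi * Complex.I) := by
    rw [show z = z' + N * t by linarith]
    push_cast
    field_simp
  rw [eDiv, eDiv, harg, Complex.exp_add, Complex.exp_int_mul_two_pi_mul_I, mul_one]

lemma eDiv_mul_add_mul {N₁ N₂ : ℕ} (h₁ : N₁ ≠ 0) (h₂ : N₂ ≠ 0) (z₁ z₂ : ℤ) :
    eDiv (N₁ * N₂) (z₁ * N₂ + z₂ * N₁) = eDiv N₁ z₁ * eDiv N₂ z₂ := by
  have h₁C : (N₁ : ℂ) ≠ 0 := Nat.cast_ne_zero.mpr h₁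
  have h₂C : (N₂ : ℂ) ≠ 0 := Nat.cast_ne_zero.mpr h₂
  rw [eDiv, eDiv, eDiv, ← Complex.exp_add]
  congr 1
  push_cast
  field_simp

lemma psi_congr {n : ℤ} (a : Fin 4 → ℤ) {k k' : Fin 4 → ℤ} (h : ∀ i, k i ≡ k' i [ZMOD n]) :
    psi a k ≡ psi a k' [ZMOD n] :=
  Int.ModEq.sum fun i _ => ((h i).pow 2).mul_left _

lemma psi_mul_left (a : Fin 4 → ℤ) (t : ℤ) (k : Fin 4 → ℤ) :
    psi a (fun i => t * k i) = t ^ 2 * psi a k := by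
  simp only [psi, mul_sum]
  exact sum_congr rfl fun i _ => by ring

def phase (a w : Fin 4 → ℤ) (x : ℤ) (k : Fin 4 → ℤ) : ℤ := x * psi a k + ∑ i, w i * k i

noncomputable def summand (a b : Fin 4 → ℤ) (q c : ℕ) (w : Fin 4 → ℤ) (x : ℤ)
    (k : Fin 4 → ℤ) : ℂ :=
  if (q : ℤ) ∣ psi a k then jacobiSym (psi b k) q * eDiv (q * c) (phase a w x k) else 0

section ScaledResidues

variable {K k : Fin 4 → ℤ} {t : ℤ}

lemma dvd_psi_iff_of_modEq_mul (a : Fin 4 → ℤ) {q : ℤ} (ht : IsCoprime q t)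
    (hk : ∀ i, K i ≡ t * k i [ZMOD q]) : q ∣ psi a K ↔ q ∣ psi a k := by
  rw [(psi_congr a hk).dvd_iff, psi_mul_left]
  exact ⟨ht.pow_right.dvd_of_dvd_mul_left, fun h => h.mul_left _⟩

lemma jacobiSym_psi_of_modEq_mul (b : Fin 4 → ℤ) {q : ℕ} (ht : IsCoprime (q : ℤ) t)
    (hk : ∀ i, K i ≡ t * k i [ZMOD q]) : jacobiSym (psi b K) q = jacobiSym (psi b k) q := by
  rw [jacobiSym.mod_left' (psi_congr b hk), psi_mul_left, jacobiSym.mul_left,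
    jacobiSym.sq_one' (Int.isCoprime_iff_gcd_eq_one.mp ht.symm), one_mul]

lemma phase_modEq_of_modEq_mul (a w : Fin 4 → ℤ) {q c X x : ℤ} (hx : X * t ≡ x [ZMOD c])
    (hk : ∀ i, K i ≡ t * k i [ZMOD q * c]) (hq : q ∣ psi a k) :
    phase a w X K ≡ t * phase a w x k [ZMOD q * c] := by
  have hlin : ∑ i, w i * K i ≡ ∑ i, w i * (t * k i) [ZMOD q * c] :=
    Int.ModEq.sum fun i _ => (hk i).mul_left _
  refine (((psi_congr a hk).mul_left X).add hlin).trans ?_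
  obtain ⟨m, hm⟩ := hq
  obtain ⟨u, hu⟩ := hx.symm.dvd
  have hscale : ∑ i, w i * (t * k i) = t * ∑ i, w i * k i := by
    rw [mul_sum]; exact sum_congr rfl fun i _ => by ring
  refine (Int.modEq_iff_dvd.mpr ⟨t * m * u, ?_⟩).symm
  rw [phase, psi_mul_left, hscale]
  linear_combination (t * psi a k) * hu + (t * c * u) * hm

end ScaledResidues

theorem summand_mul (a b w : Fin 4 → ℤ) {q₁ q₂ c₁ c₂ : ℕ} (hq₁ : q₁ ≠ 0) (hq₂ : q₂ ≠ 0)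
    (hc₁ : c₁ ≠ 0) (hc₂ : c₂ ≠ 0) (hcop : (q₁ * c₁).Coprime (q₂ * c₂))
    {X x₁ x₂ : ℤ} {K k₁ k₂ : Fin 4 → ℤ}
    (hx₁ : X * (q₂ * c₂) ≡ x₁ [ZMOD c₁]) (hx₂ : X * (q₁ * c₁) ≡ x₂ [ZMOD c₂])
    (hk₁ : ∀ i, K i ≡ (q₂ * c₂) * k₁ i [ZMOD q₁ * c₁])
    (hk₂ : ∀ i, K i ≡ (q₁ * c₁) * k₂ i [ZMOD q₂ * c₂]) :
    summand a b (q₁ * q₂) (c₁ * c₂) w X K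
      = summand a b q₁ c₁ w x₁ k₁ * summand a b q₂ c₂ w x₂ k₂ := by
  have hN : IsCoprime ((q₁ : ℤ) * c₁) ((q₂ : ℤ) * c₂) := by
    exact_mod_cast Nat.isCoprime_iff_coprime.mpr hcop
  have hq₁N₂ : IsCoprime (q₁ : ℤ) (q₂ * c₂) := hN.of_mul_left_left
  have hq₂N₁ : IsCoprime (q₂ : ℤ) (q₁ * c₁) := hN.symm.of_mul_left_left
  have hk₁' : ∀ i, K i ≡ (q₂ * c₂) * k₁ i [ZMOD q₁] := fun i => (hk₁ i).of_mul_right _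
  have hk₂' : ∀ i, K i ≡ (q₁ * c₁) * k₂ i [ZMOD q₂] := fun i => (hk₂ i).of_mul_right _
  have hdvd : ((q₁ * q₂ : ℕ) : ℤ) ∣ psi a K ↔ (q₁ : ℤ) ∣ psi a k₁ ∧ (q₂ : ℤ) ∣ psi a k₂ := by
    rw [← dvd_psi_iff_of_modEq_mul a hq₁N₂ hk₁', ← dvd_psi_iff_of_modEq_mul a hq₂N₁ hk₂',
      Nat.cast_mul]
    exact ⟨fun h => ⟨dvd_of_mul_right_dvd h, dvd_of_mul_left_dvd h⟩,
      fun h => hN.of_mul_left_left.of_mul_right_left.mul_dvd h.1 h.2⟩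
  have hjacobi : jacobiSym (psi b K) (q₁ * q₂)
      = jacobiSym (psi b k₁) q₁ * jacobiSym (psi b k₂) q₂ := by
    rw [jacobiSym.mul_right' _ hq₁ hq₂, jacobiSym_psi_of_modEq_mul b hq₁N₂ hk₁',
      jacobiSym_psi_of_modEq_mul b hq₂N₁ hk₂']
  unfold summand
  by_cases h₁ : (q₁ : ℤ) ∣ psi a k₁
  swap
  · rw [if_neg h₁, zero_mul, if_neg fun h => h₁ (hdvd.mp h).1]
  by_cases h₂ : (q₂ : ℤ) ∣ psi a k₂
  swap
  · rw [if_neg h₂, mul_zero, if_neg fun h => h₂ (hdvd.mp h).2]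
  have hphase : eDiv (q₁ * q₂ * (c₁ * c₂)) (phase a w X K)
      = eDiv (q₁ * c₁) (phase a w x₁ k₁) * eDiv (q₂ * c₂) (phase a w x₂ k₂) := by
    rw [mul_mul_mul_comm, ← eDiv_mul_add_mul (by positivity) (by positivity)]
    refine eDiv_congr (by positivity) ?_
    push_cast
    rw [← Int.modEq_and_modEq_iff_modEq_mul (by simpa [Int.natAbs_mul] using hcop)]
    constructor
    · refine (phase_modEq_of_modEq_mul a w hx₁ hk₁ h₁).trans ?_
      exact Int.modEq_iff_dvd.mpr ⟨phase a w x₂ k₂, by ring⟩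
    · refine (phase_modEq_of_modEq_mul a w hx₂ hk₂ h₂).trans ?_
      exact Int.modEq_iff_dvd.mpr ⟨phase a w x₁ k₁, by ring⟩
  rw [if_pos (hdvd.mpr ⟨h₁, h₂⟩), if_pos h₁, if_pos h₂, hjacobi, hphase]
  push_cast
  ring

lemma sum_range_coprime_eq_sum_units {M : Type*} [AddCommMonoid M] {n : ℕ} [NeZero n]
    (f : ℕ → M) :
    ∑ x ∈ (range n).filter (fun x => x.Coprime n), f x = ∑ u : (ZMod n)ˣ, f (u : ZMod n).val := by
  symm
  refine sum_bij (fun u _ => (u : ZMod n).val) (fun u _ => ?_) (fun u _ v _ h => ?_)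
    (fun x hx => ?_) fun _ _ => rfl
  · exact mem_filter.mpr ⟨mem_range.mpr (ZMod.val_lt _), ZMod.val_coe_unit_coprime u⟩
  · exact Units.ext (ZMod.val_injective n h)
  · rw [mem_filter, mem_range] at hx
    exact ⟨ZMod.unitOfCoprime x hx.2, mem_univ _, by simp [Nat.mod_eq_of_lt hx.1]⟩

lemma sum_piFinset_range_eq_sum_zmod {ι M : Type*} [Fintype ι] [DecidableEq ι]
    [AddCommMonoid M] {n : ℕ} [NeZero n] (f : (ι → ℕ) → M) :
    ∑ k ∈ Fintype.piFinset (fun _ : ι => range n), f k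
      = ∑ k : ι → ZMod n, f (fun i => (k i).val) := by
  symm
  refine sum_nbij' (fun k i => (k i).val) (fun k i => (k i : ZMod n)) (fun k _ => ?_)
    (fun k _ => mem_univ _) (fun k _ => ?_) (fun k hk => ?_) fun _ _ => rfl
  · simp [ZMod.val_lt]
  · funext i
    exact ZMod.natCast_zmod_val (k i)
  · funext i
    simp [Nat.mod_eq_of_lt (mem_range.mp (Fintype.mem_piFinset.mp hk i))]

lemma S_eq_sum_units (a b : Fin 4 → ℤ) {q c N : ℕ} [NeZero c] [NeZero N] (hN : q * c = N)
    (w : Fin 4 → ℤ) :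
    S a b q c w = ∑ u : (ZMod c)ˣ, ∑ k : Fin 4 → ZMod N,
      summand a b q c w (u : ZMod c).val (fun i => (k i).val) := by
  subst hN
  rw [S, sum_range_coprime_eq_sum_units]
  refine Fintype.sum_congr _ _ fun u => ?_
  rw [sum_filter, sum_piFinset_range_eq_sum_zmod]
  refine Fintype.sum_congr _ _ fun k => ?_
  simp only [summand, eDiv, phase]
  push_cast
  rfl

namespace ZMod

variable {m n : ℕ} (h : m.Coprime n)

def unitsEquivProdMul (s : (ZMod m)ˣ) (t : (ZMod n)ˣ) :
    (ZMod (m * n))ˣ ≃ (ZMod m)ˣ × (ZMod n)ˣ :=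
  ((Units.mapEquiv (chineseRemainder h).toMulEquiv).trans MulEquiv.prodUnits).toEquiv.trans
    ((Equiv.mulRight s).prodCongr (Equiv.mulRight t))

def prodEquivMul (s : (ZMod m)ˣ) (t : (ZMod n)ˣ) : ZMod m × ZMod n ≃ ZMod (m * n) :=
  ((Units.mulRight s).prodCongr (Units.mulRight t)).trans (chineseRemainder h).symm.toEquiv

variable (s : (ZMod m)ˣ) (t : (ZMod n)ˣ)

lemma coe_unitsEquivProdMul_fst (u : (ZMod (m * n))ˣ) :
    ((unitsEquivProdMul h s t u).1 : ZMod m) = cast (u : ZMod (m * n)) * s := by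
  change (chineseRemainder h u).1 * s = _
  simp [chineseRemainder, Prod.fst_zmod_cast]

lemma coe_unitsEquivProdMul_snd (u : (ZMod (m * n))ˣ) :
    ((unitsEquivProdMul h s t u).2 : ZMod n) = cast (u : ZMod (m * n)) * t := by
  change (chineseRemainder h u).2 * t = _
  simp [chineseRemainder, Prod.snd_zmod_cast]

lemma cast_prodEquivMul_fst (p : ZMod m × ZMod n) :
    (cast (prodEquivMul h s t p) : ZMod m) = p.1 * s := by
  have := congrArg Prod.fst ((chineseRemainder h).apply_symm_apply (p.1 * s, p.2 * t))
  simpa [prodEquivMul, chineseRemainder] using this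

lemma cast_prodEquivMul_snd (p : ZMod m × ZMod n) :
    (cast (prodEquivMul h s t p) : ZMod n) = p.2 * t := by
  have := congrArg Prod.snd ((chineseRemainder h).apply_symm_apply (p.1 * s, p.2 * t))
  simpa [prodEquivMul, chineseRemainder] using this

end ZMod

theorem stmt_9_general (a b : Fin 4 → ℤ)
    (q₁ q₂ c₁ c₂ : ℕ) (hq₁ : 0 < q₁) (hq₂ : 0 < q₂) (hc₁ : 0 < c₁) (hc₂ : 0 < c₂)
    (hcop : Nat.Coprime (q₁ * c₁) (q₂ * c₂)) :
    ∀ w : Fin 4 → ℤ, S a b (q₁ * q₂) (c₁ * c₂) w = S a b q₁ c₁ w * S a b q₂ c₂ w := by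
  intro w
  have := NeZero.of_pos hq₁; have := NeZero.of_pos hq₂
  have := NeZero.of_pos hc₁; have := NeZero.of_pos hc₂
  have hc : c₁.Coprime c₂ :=
    (hcop.coprime_dvd_left (dvd_mul_left c₁ q₁)).coprime_dvd_right (dvd_mul_left c₂ q₂)
  let eX := ZMod.unitsEquivProdMul hc
    (ZMod.unitOfCoprime _ (hcop.symm.coprime_dvd_right (dvd_mul_left c₁ q₁)))
    (ZMod.unitOfCoprime _ (hcop.coprime_dvd_right (dvd_mul_left c₂ q₂)))
  let eK := ZMod.prodEquivMul hcop (ZMod.unitOfCoprime _ hcop.symm) (ZMod.unitOfCoprime _ hcop)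
  rw [S_eq_sum_units a b (mul_mul_mul_comm q₁ q₂ c₁ c₂) w, S_eq_sum_units a b rfl w,
    S_eq_sum_units a b rfl w, sum_mul_sum]
  conv_rhs => rw [← Fintype.sum_prod_type']
  refine Fintype.sum_equiv eX _ _ fun U => ?_
  rw [sum_mul_sum, ← Fintype.sum_prod_type']
  refine (Fintype.sum_equiv ((Equiv.arrowProdEquivProdArrow _ _ _).symm.trans
    (Equiv.piCongrRight fun _ => eK)) _ _ fun k => ?_).symm
  refine (summand_mul a b w hq₁.ne' hq₂.ne' hc₁.ne' hc₂.ne' hcop ?_ ?_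
    (fun i => ?_) fun i => ?_).symm
  all_goals refine (ZMod.intCast_eq_intCast_iff _ _ _).mp ?_; push_cast
  · simp [eX, ZMod.coe_unitsEquivProdMul_fst]
  · simp [eX, ZMod.coe_unitsEquivProdMul_snd]
  · simp [eK, ZMod.cast_prodEquivMul_fst, mul_comm]
  · simp [eK, ZMod.cast_prodEquivMul_snd, mul_comm]

/-- multiplicativity: if `q = q₁q₂`, `c = c₁c₂` with `q₁, q₂` odd and
`gcd(q₁c₁, q₂c₂) = 1`, then `S_{q,c}(w) = S_{q₁,c₁}(w)·S_{q₂,c₂}(w)`. -/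
theorem stmt_9 (a b : Fin 4 → ℤ) (ha : ∀ i, a i ≠ 0) (hb : ∀ i, b i ≠ 0)
    (q₁ q₂ c₁ c₂ : ℕ) (hq₁ : 0 < q₁) (hq₂ : 0 < q₂) (hc₁ : 0 < c₁) (hc₂ : 0 < c₂)
    (hq₁odd : Odd q₁) (hq₂odd : Odd q₂)
    (hcop : Nat.Coprime (q₁ * c₁) (q₂ * c₂)) :
    ∀ w : Fin 4 → ℤ, S a b (q₁ * q₂) (c₁ * c₂) w = S a b q₁ c₁ w * S a b q₂ c₂ w :=
  stmt_9_general a b q₁ q₂ c₁ c₂ hq₁ hq₂ hc₁ hc₂ hcop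
end
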